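/- The semiring R₂ satisfies the identity u ≈ v if and only if T(u) = T(v). -/
import Mathlib


/-- The value in `Bool` (under multiplication `mul` and assignment `φ`) of a word,
i.e. a nonempty list of variables: the product of the images of its letters, in order.
(The value `false` on the empty list is junk; words are required to be nonempty.) -/
def wordVal (mul : Bool → Bool → Bool) (φ : ℕ → Bool) : List ℕ → Bool
  | [] => false
  | a :: rest => rest.foldl (fun acc x => mul acc (φ x)) (φ a)

/-- The value of a term, i.e. a nonempty list of words: the sum (under `add`) of the
values of its entries. (The value `false` on the empty list is junk; terms are
required to be nonempty.) -/
def termVal (add mul : Bool → Bool → Bool) (φ : ℕ → Bool) : List (List ℕ) → Bool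
  | [] => false
  | w :: rest => rest.foldl (fun acc q => add acc (wordVal mul φ q)) (wordVal mul φ w)

/-- The two-element semiring on `Bool` with addition `add` and multiplication `mul`
satisfies the identity `u ≈ v`. -/
def Satisfies (add mul : Bool → Bool → Bool) (u v : List (List ℕ)) : Prop :=
  ∀ φ : ℕ → Bool, termVal add mul φ u = termVal add mul φ v

lemma wordVal_last (φ : ℕ → Bool) : ∀ (w : List ℕ) (n : ℕ), w.getLast? = some n →
    wordVal (fun _ y => y) φ w = φ n := by
  intro w
  induction w with
  | nil => simp
  | cons a rest ih =>
    intro n hn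
    cases rest with
    | nil => simp_all [wordVal]
    | cons b t =>
      rw [List.getLast?_cons_cons] at hn
      have := ih n hn
      simpa [wordVal] using this

lemma foldl_or (g : List ℕ → Bool) : ∀ (l : List (List ℕ)) (init : Bool),
    l.foldl (fun acc q => acc || g q) init = (init || l.any g) := by
  intro l
  induction l with
  | nil => simp
  | cons w t ih => intro init; simp [ih, Bool.or_assoc]

lemma termVal_any (φ : ℕ → Bool) (w : List ℕ) (rest : List (List ℕ)) :
    termVal (fun x y => x || y) (fun _ y => y) φ (w :: rest) =
      (w :: rest).any (wordVal (fun _ y => y) φ) := by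
  simp [termVal, foldl_or]

lemma exists_last {w : List ℕ} (h : w ≠ []) : ∃ n, w.getLast? = some n := by
  cases hw : w.getLast? with
  | none => exact absurd (List.getLast?_eq_none_iff.mp hw) h
  | some n => exact ⟨n, rfl⟩

lemma any_iff (φ : ℕ → Bool) (u : List (List ℕ)) (hu' : ∀ w ∈ u, w ≠ []) :
    u.any (wordVal (fun _ y => y) φ) = true ↔
      ∃ n, (∃ w ∈ u, w.getLast? = some n) ∧ φ n = true := by
  rw [List.any_eq_true]
  constructor
  · rintro ⟨w, hw, hval⟩
    obtain ⟨n, hn⟩ := exists_last (hu' w hw)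
    exact ⟨n, ⟨w, hw, hn⟩, by rw [← wordVal_last φ w n hn]; exact hval⟩
  · rintro ⟨n, ⟨w, hw, hn⟩, hφ⟩
    exact ⟨w, hw, by rw [wordVal_last φ w n hn]; exact hφ⟩

/-- Lemma 1.1(2): `R₂` (addition `∨`, multiplication `x·y = y`) satisfies `u ≈ v`
iff `T(u) = T(v)`, where `T` is the set of last letters of the entries. -/
theorem R2_satisfies_iff (u v : List (List ℕ))
    (hu : u ≠ []) (hv : v ≠ []) (hu' : ∀ w ∈ u, w ≠ []) (hv' : ∀ w ∈ v, w ≠ []) :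
    Satisfies (fun x y => x || y) (fun _ y => y) u v ↔
      {n : ℕ | ∃ w ∈ u, w.getLast? = some n} = {n : ℕ | ∃ w ∈ v, w.getLast? = some n} := by
  obtain ⟨w₀, u', rfl⟩ : ∃ w t, u = w :: t := by cases u with
    | nil => exact absurd rfl hu | cons w t => exact ⟨w, t, rfl⟩
  obtain ⟨w₁, v', rfl⟩ : ∃ w t, v = w :: t := by cases v with
    | nil => exact absurd rfl hv | cons w t => exact ⟨w, t, rfl⟩
  constructor
  · intro hsat
    ext n
    simp only [Set.mem_setOf_eq]
    have key : ∀ (a b : List (List ℕ)), (∀ w ∈ a, w ≠ []) → (∀ w ∈ b, w ≠ []) →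
        (∀ φ, a.any (wordVal (fun _ y => y) φ) = b.any (wordVal (fun _ y => y) φ)) →
        (∃ w ∈ a, w.getLast? = some n) → (∃ w ∈ b, w.getLast? = some n) := by
      rintro a b ha hb hab ⟨w, hw, hn⟩
      set φ : ℕ → Bool := fun m => decide (m = n) with hφ
      have h1 : a.any (wordVal (fun _ y => y) φ) = true :=
        (any_iff φ a ha).mpr ⟨n, ⟨w, hw, hn⟩, by simp [hφ]⟩
      have h2 := (any_iff φ b hb).mp (hab φ ▸ h1)
      obtain ⟨m, hm, hφm⟩ := h2
      simp only [hφ, decide_eq_true_eq] at hφm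
      exact hφm ▸ hm
    have hsat' : ∀ φ, (w₀ :: u').any (wordVal (fun _ y => y) φ) =
        (w₁ :: v').any (wordVal (fun _ y => y) φ) := by
      intro φ
      have := hsat φ
      rwa [termVal_any, termVal_any] at this
    exact ⟨key _ _ hu' hv' hsat', key _ _ hv' hu' (fun φ => (hsat' φ).symm)⟩
  · intro hT φ
    rw [termVal_any, termVal_any]
    have : ∀ n, (∃ w ∈ w₀ :: u', w.getLast? = some n) ↔ (∃ w ∈ w₁ :: v', w.getLast? = some n) :=
      fun n => Set.ext_iff.mp hT n
    rcases h1 : (w₀ :: u').any (wordVal (fun _ y => y) φ) with _ | _ <;>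
      rcases h2 : (w₁ :: v').any (wordVal (fun _ y => y) φ) with _ | _
    · rfl
    · obtain ⟨n, hn, hφn⟩ := (any_iff φ _ hv').mp h2
      have := (any_iff φ _ hu').mpr ⟨n, (this n).mpr hn, hφn⟩
      rw [h1] at this; exact this
    · obtain ⟨n, hn, hφn⟩ := (any_iff φ _ hu').mp h1
      have := (any_iff φ _ hv').mpr ⟨n, (this n).mp hn, hφn⟩
      rw [h2] at this; exact this.symm
    · rfl
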